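/- Suppose decryption of a ciphertext c is defined as the centered residue of c modulo r (in (-r/2, r/2)) reduced mod 2, where r is odd. If c = d + 2e + r·q with d ∈ {0,1} and |2e + d| < r/2, then decryption returns d. -/
import Mathlib


/-- Centered-mod-r-then-mod-2 decryption returns d when the noise part is small. -/
theorem centered_decrypt_correct (r d e q c : ℤ) (hr : Odd r) (hrpos : 0 < r)
    (hd : d = 0 ∨ d = 1) (hc : c = d + 2 * e + r * q)
    (hnoise : (|2 * e + d| : ℚ) < (r : ℚ) / 2) :
    ∀ x : ℤ, x ≡ c [ZMOD r] → -((r : ℚ) / 2) < (x : ℚ) → (x : ℚ) < (r : ℚ) / 2 →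
      x % 2 = d := by
  intro x hx h1 h2
  have hxq : |(x : ℚ)| < (r : ℚ) / 2 := abs_lt.mpr ⟨h1, h2⟩
  have hb1 : 2 * |x| < r := by
    have : ((2 * |x| : ℤ) : ℚ) < (r : ℚ) := by push_cast; linarith
    exact_mod_cast this
  have hb2 : 2 * |2 * e + d| < r := by
    have : ((2 * |2 * e + d| : ℤ) : ℚ) < (r : ℚ) := by push_cast; linarith
    exact_mod_cast this
  have hdvd0 : r ∣ c - x := hx.dvd
  have hdvd : r ∣ x - (2 * e + d) := by
    have h3 : r ∣ (c - x) - r * q := hdvd0.sub (Dvd.intro q rfl)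
    have h4 : x - (2 * e + d) = -((c - x) - r * q) := by rw [hc]; ring
    rw [h4]
    exact h3.neg_right
  have habs : |x - (2 * e + d)| < r := by
    have := abs_sub x (2 * e + d)
    linarith [abs_sub_abs_le_abs_sub x (2 * e + d), abs_sub x (2 * e + d)]
  have hz : x - (2 * e + d) = 0 := Int.eq_zero_of_abs_lt_dvd hdvd habs
  omega
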